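/- Let H be a complex Hilbert space, D a bounded selfadjoint operator on H, and R := (1 + D²)^{-1/2} the inverse of the positive square root of 1 + D². Define the operator D̃ on the Hilbert space direct sum H ⊕ H in block form by D̃(ξ, η) := (Dξ + Rη, Rξ − Dη). Then D̃ is selfadjoint, D̃² is the block-diagonal operator (D² + (1 + D²)^{-1}) ⊕ (D² + (1 + D²)^{-1}), one has D̃² ≥ 1 (i.e. ⟨D̃²ζ, ζ⟩ ≥ ‖ζ‖² for all ζ ∈ H ⊕ H), and D̃ is invertible with ‖D̃^{-1}‖ ≤ 1. -/

import Mathlib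

/-- `(1 + D²)^{-1/2}`, the inverse of the unique positive square root of `1 + D²`
(the square root being given by the continuous functional calculus of `Real.sqrt`). -/
noncomputable def invSqrtOnePlusSq {H : Type*} [NormedAddCommGroup H]
    [InnerProductSpace ℂ H] [CompleteSpace H] (D : H →L[ℂ] H) : H →L[ℂ] H :=
  Ring.inverse (cfc Real.sqrt (1 + D ^ 2))

section Aux

variable {H : Type*} [NormedAddCommGroup H] [InnerProductSpace ℂ H] [CompleteSpace H]

lemma onePlusSq_eq_cfc (D : H →L[ℂ] H) (hD : IsSelfAdjoint D) :
    (1 + D ^ 2 : H →L[ℂ] H) = cfc (fun x : ℝ => 1 + x ^ 2) D := by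
  have h1 : (cfc (fun _ : ℝ => (1:ℝ)) D) = 1 := by simpa using cfc_const (1 : ℝ) D hD
  rw [cfc_add _ _ _, cfc_pow_id D 2, h1]

lemma invSqrt_eq_cfc (D : H →L[ℂ] H) (hD : IsSelfAdjoint D) :
    invSqrtOnePlusSq D = cfc (fun x : ℝ => (Real.sqrt (1 + x ^ 2))⁻¹) D := by
  have hs : cfc Real.sqrt (1 + D ^ 2) = cfc (fun x : ℝ => Real.sqrt (1 + x ^ 2)) D := by
    rw [onePlusSq_eq_cfc D hD, ← cfc_comp' Real.sqrt (fun x : ℝ => 1 + x ^ 2) D]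
  rw [invSqrtOnePlusSq, hs, ← cfc_inv (fun x : ℝ => Real.sqrt (1 + x ^ 2)) D
    (fun x _ => ne_of_gt (Real.sqrt_pos.2 (by positivity)))]

lemma invSqrt_selfAdjoint (D : H →L[ℂ] H) (hD : IsSelfAdjoint D) :
    IsSelfAdjoint (invSqrtOnePlusSq D) := by
  rw [invSqrt_eq_cfc D hD]; exact IsSelfAdjoint.cfc

lemma invSqrt_commute (D : H →L[ℂ] H) (hD : IsSelfAdjoint D) :
    Commute D (invSqrtOnePlusSq D) := by
  rw [invSqrt_eq_cfc D hD]
  conv_lhs => rw [← cfc_id ℝ D hD]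
  exact cfc_commute_cfc _ _ D

lemma invSqrt_mul_self (D : H →L[ℂ] H) (hD : IsSelfAdjoint D) :
    invSqrtOnePlusSq D * invSqrtOnePlusSq D = Ring.inverse (1 + D ^ 2) := by
  have h2 : Ring.inverse (1 + D ^ 2 : H →L[ℂ] H) = cfc (fun x : ℝ => (1 + x ^ 2)⁻¹) D := by
    rw [onePlusSq_eq_cfc D hD,
      ← cfc_inv (fun x : ℝ => 1 + x ^ 2) D (fun x _ => by positivity)]
  have hcont : ContinuousOn (fun x : ℝ => (Real.sqrt (1 + x ^ 2))⁻¹) (spectrum ℝ D) :=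
    ((Real.continuous_sqrt.comp (by continuity)).inv₀
      (fun x => ne_of_gt (Real.sqrt_pos.2 (by positivity)))).continuousOn
  rw [invSqrt_eq_cfc D hD, h2, ← cfc_mul _ _ D hcont hcont]
  apply cfc_congr
  intro x _
  have h0 : (0:ℝ) ≤ 1 + x ^ 2 := by positivity
  show (Real.sqrt (1 + x ^ 2))⁻¹ * (Real.sqrt (1 + x ^ 2))⁻¹ = (1 + x ^ 2)⁻¹
  rw [← mul_inv, Real.mul_self_sqrt h0]

/-- The operator `D² + (1+D²)⁻¹` equals `1 + B*B` for the selfadjoint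
`B = D² · (1+D²)^{-1/2}`. -/
lemma block_eq_one_add (D : H →L[ℂ] H) (hD : IsSelfAdjoint D) :
    ∃ B : H →L[ℂ] H, IsSelfAdjoint B ∧
      (D ^ 2 + Ring.inverse (1 + D ^ 2) : H →L[ℂ] H) = 1 + B * B := by
  have hcont : ContinuousOn (fun x : ℝ => x ^ 2 * (Real.sqrt (1 + x ^ 2))⁻¹) (spectrum ℝ D) :=
    (continuous_pow 2 |>.mul ((Real.continuous_sqrt.comp (by continuity)).inv₀
      (fun x => ne_of_gt (Real.sqrt_pos.2 (by positivity))))).continuousOn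
  have hBsa : IsSelfAdjoint (cfc (fun x : ℝ => x ^ 2 * (Real.sqrt (1 + x ^ 2))⁻¹) D) :=
    cfc_predicate (R := ℝ) _ D
  refine ⟨cfc (fun x : ℝ => x ^ 2 * (Real.sqrt (1 + x ^ 2))⁻¹) D, hBsa, ?_⟩
  have h2 : Ring.inverse (1 + D ^ 2 : H →L[ℂ] H) = cfc (fun x : ℝ => (1 + x ^ 2)⁻¹) D := by
    rw [onePlusSq_eq_cfc D hD,
      ← cfc_inv (fun x : ℝ => 1 + x ^ 2) D (fun x _ => by positivity)]
  have h1 : (cfc (fun _ : ℝ => (1:ℝ)) D) = 1 := by simpa using cfc_const (1 : ℝ) D hD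
  have hpow : (D ^ 2 : H →L[ℂ] H) = cfc (fun x : ℝ => x ^ 2) D := (cfc_pow_id D 2).symm
  have hcont2 : ContinuousOn (fun x : ℝ => (1 + x ^ 2)⁻¹) (spectrum ℝ D) :=
    (Continuous.inv₀ (by continuity) fun x => by positivity).continuousOn
  rw [h2, hpow, ← cfc_add (a := D) (fun x : ℝ => x ^ 2) (fun x : ℝ => (1 + x ^ 2)⁻¹)
      (by fun_prop) hcont2,
    ← cfc_mul _ _ D hcont hcont, ← h1,
    ← cfc_add (a := D) (fun _ : ℝ => (1:ℝ))
      (fun x : ℝ => x ^ 2 * (Real.sqrt (1 + x ^ 2))⁻¹ * (x ^ 2 * (Real.sqrt (1 + x ^ 2))⁻¹))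
      (by fun_prop) (hcont.mul hcont)]
  apply cfc_congr
  intro x _
  show x ^ 2 + (1 + x ^ 2)⁻¹
      = 1 + x ^ 2 * (Real.sqrt (1 + x ^ 2))⁻¹ * (x ^ 2 * (Real.sqrt (1 + x ^ 2))⁻¹)
  have h0 : (0:ℝ) < 1 + x ^ 2 := by positivity
  have hs : Real.sqrt (1 + x ^ 2) * Real.sqrt (1 + x ^ 2) = 1 + x ^ 2 :=
    Real.mul_self_sqrt h0.le
  have hsne : Real.sqrt (1 + x ^ 2) ≠ 0 := ne_of_gt (Real.sqrt_pos.2 h0)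
  field_simp
  rw [Real.sq_sqrt h0.le]; ring

/-- A symmetric bounded-below operator on a complex Hilbert space is invertible,
with inverse of norm at most one when the lower bound is `1`. -/
lemma exists_inverse {E : Type*} [NormedAddCommGroup E] [InnerProductSpace ℂ E]
    [CompleteSpace E] (T : E →L[ℂ] E) (hsym : (T : E →ₗ[ℂ] E).IsSymmetric)
    (hc : ∀ x : E, ‖x‖ ≤ ‖T x‖) :
    ∃ Tinv : E →L[ℂ] E, T * Tinv = 1 ∧ Tinv * T = 1 ∧ ‖Tinv‖ ≤ 1 := by
  have hker : LinearMap.ker (T : E →ₗ[ℂ] E) = ⊥ := by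
    rw [LinearMap.ker_eq_bot']
    intro x hx
    exact norm_le_zero_iff.1 (by have hx' : T x = 0 := hx; simpa [hx'] using hc x)
  have hanti : AntilipschitzWith 1 T := T.antilipschitz_of_bound (by simpa using hc)
  have hclosed : IsClosed (Set.range T) :=
    (hanti.isClosedEmbedding T.uniformContinuous).isClosed_range
  have hKclosed : IsClosed ((LinearMap.range (T : E →ₗ[ℂ] E) : Submodule ℂ E) : Set E) := by
    simpa [LinearMap.coe_range] using hclosed
  haveI : CompleteSpace (LinearMap.range (T : E →ₗ[ℂ] E) : Submodule ℂ E) := hKclosed.completeSpace_coe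
  have horth : (LinearMap.range (T : E →ₗ[ℂ] E) : Submodule ℂ E)ᗮ = ⊥ := by
    rw [Submodule.eq_bot_iff]
    intro v hv
    rw [Submodule.mem_orthogonal] at hv
    have hTv : T v = 0 := by
      have h1 : @inner ℂ _ _ (T (T v)) v = 0 := hv (T (T v)) ⟨T v, rfl⟩
      have hsv : @inner ℂ _ _ (T (T v)) v = @inner ℂ _ _ (T v) (T v) := hsym (T v) v
      exact inner_self_eq_zero.1 (by rw [← hsv]; exact h1)
    exact norm_le_zero_iff.1 (by simpa [hTv] using hc v)
  have hrange : LinearMap.range (T : E →ₗ[ℂ] E) = ⊤ := Submodule.orthogonal_eq_bot_iff.1 horth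
  let e := ContinuousLinearEquiv.ofBijective T hker hrange
  have heT : ∀ x, e x = T x := fun _ => rfl
  have hTe : ∀ x, T (e.symm x) = x := fun x => by
    rw [← heT]; exact e.apply_symm_apply x
  refine ⟨(e.symm : E →L[ℂ] E), ?_, ?_, ?_⟩
  · ext x
    simpa using hTe x
  · ext x
    have : e.symm (T x) = x := by rw [← heT]; exact e.symm_apply_apply x
    simpa using this
  · refine ContinuousLinearMap.opNorm_le_bound _ zero_le_one fun x => ?_
    rw [one_mul]
    calc ‖(e.symm : E →L[ℂ] E) x‖ ≤ ‖T ((e.symm : E →L[ℂ] E) x)‖ := hc _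
    _ = ‖x‖ := by rw [show T ((e.symm : E →L[ℂ] E) x) = x from hTe x]

end Aux

/-- The invertible double: for a bounded selfadjoint operator `D` on a complex Hilbert
space `H`, with `R = (1 + D²)^{-1/2}`, the block operator `D̃(ξ, η) = (Dξ + Rη, Rξ − Dη)`
on the Hilbert direct sum `H ⊕ H` is selfadjoint, `D̃²` is block-diagonal with entries
`D² + (1 + D²)⁻¹`, `D̃² ≥ 1`, and `D̃` is invertible with `‖D̃⁻¹‖ ≤ 1`. -/
theorem invertible_double
    {H : Type*} [NormedAddCommGroup H] [InnerProductSpace ℂ H] [CompleteSpace H]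
    (D : H →L[ℂ] H) (hD : IsSelfAdjoint D)
    (T : WithLp 2 (H × H) →L[ℂ] WithLp 2 (H × H))
    (hT : ∀ ξ η : H,
      T ((WithLp.equiv 2 (H × H)).symm (ξ, η)) =
        (WithLp.equiv 2 (H × H)).symm
          (D ξ + invSqrtOnePlusSq D η, invSqrtOnePlusSq D ξ - D η)) :
    IsSelfAdjoint T ∧
    (∀ ξ η : H,
      (T * T) ((WithLp.equiv 2 (H × H)).symm (ξ, η)) =
        (WithLp.equiv 2 (H × H)).symm
          ((D ^ 2 + Ring.inverse (1 + D ^ 2) : H →L[ℂ] H) ξ,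
            (D ^ 2 + Ring.inverse (1 + D ^ 2) : H →L[ℂ] H) η)) ∧
    (∀ ζ : WithLp 2 (H × H), ‖ζ‖ ^ 2 ≤ (@inner ℂ _ _ ((T * T) ζ) ζ).re) ∧
    ∃ Tinv : WithLp 2 (H × H) →L[ℂ] WithLp 2 (H × H),
      T * Tinv = 1 ∧ Tinv * T = 1 ∧ ‖Tinv‖ ≤ 1 := by
  set R : H →L[ℂ] H := invSqrtOnePlusSq D with hRdef
  have hRsa : IsSelfAdjoint R := invSqrt_selfAdjoint D hD
  have hRD : Commute D R := invSqrt_commute D hD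
  have hRR : R * R = Ring.inverse (1 + D ^ 2) := invSqrt_mul_self D hD
  -- pointwise description of T
  have key : ∀ z : WithLp 2 (H × H),
      T z = (WithLp.equiv 2 (H × H)).symm (D z.ofLp.1 + R z.ofLp.2, R z.ofLp.1 - D z.ofLp.2) := fun z => hT z.ofLp.1 z.ofLp.2
  have hDsym := hD.isSymmetric
  have hRsym := hRsa.isSymmetric
  -- selfadjointness
  have hTsa : IsSelfAdjoint T := by
    rw [ContinuousLinearMap.isSelfAdjoint_iff_isSymmetric]
    intro x y
    have hDsym' : ∀ a b : H, (@inner ℂ _ _ (D a) b) = @inner ℂ _ _ a (D b) :=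
      fun a b => hDsym a b
    have hRsym' : ∀ a b : H, (@inner ℂ _ _ (R a) b) = @inner ℂ _ _ a (R b) :=
      fun a b => hRsym a b
    simp only [ContinuousLinearMap.coe_coe, key, WithLp.prod_inner_apply,
      WithLp.equiv_symm_apply, WithLp.ofLp_toLp, inner_add_left, inner_sub_left,
      inner_add_right, inner_sub_right]
    rw [hDsym' x.ofLp.1 y.ofLp.1, hRsym' x.ofLp.2 y.ofLp.1, hRsym' x.ofLp.1 y.ofLp.2, hDsym' x.ofLp.2 y.ofLp.2]
    ring
  -- the square
  have hDRv : ∀ v : H, D (R v) = R (D v) := fun v => by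
    have h := hRD.eq
    calc D (R v) = (D * R) v := rfl
    _ = (R * D) v := by rw [h]
    _ = R (D v) := rfl
  have hRRv : ∀ v : H, R (R v) = Ring.inverse (1 + D ^ 2 : H →L[ℂ] H) v := fun v => by
    calc R (R v) = (R * R) v := rfl
    _ = Ring.inverse (1 + D ^ 2 : H →L[ℂ] H) v := by rw [hRR]
  have hsq : ∀ ξ η : H,
      (T * T) ((WithLp.equiv 2 (H × H)).symm (ξ, η)) =
        (WithLp.equiv 2 (H × H)).symm
          ((D ^ 2 + Ring.inverse (1 + D ^ 2) : H →L[ℂ] H) ξ,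
            (D ^ 2 + Ring.inverse (1 + D ^ 2) : H →L[ℂ] H) η) := by
    intro ξ η
    rw [ContinuousLinearMap.mul_apply, hT ξ η, hT (D ξ + R η) (R ξ - D η)]
    congr 1
    have e1 : D (D ξ + R η) + R (R ξ - D η)
        = (D ^ 2 + Ring.inverse (1 + D ^ 2) : H →L[ℂ] H) ξ := by
      simp only [map_add, map_sub, hDRv, hRRv, ContinuousLinearMap.add_apply]
      rw [show (D ^ 2 : H →L[ℂ] H) ξ = D (D ξ) by rw [pow_two]; rfl]
      abel
    have e2 : R (D ξ + R η) - D (R ξ - D η)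
        = (D ^ 2 + Ring.inverse (1 + D ^ 2) : H →L[ℂ] H) η := by
      simp only [map_add, map_sub, hDRv, hRRv, ContinuousLinearMap.add_apply]
      rw [show (D ^ 2 : H →L[ℂ] H) η = D (D η) by rw [pow_two]; rfl]
      abel
    rw [e1, e2]
  -- the lower bound
  obtain ⟨B, hBsa, hBeq⟩ := block_eq_one_add D hD
  have hblock : ∀ ξ : H, ‖ξ‖ ^ 2 ≤
      (@inner ℂ _ _ ((D ^ 2 + Ring.inverse (1 + D ^ 2) : H →L[ℂ] H) ξ) ξ).re := by
    intro ξ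
    rw [hBeq]
    have : ((D:H →L[ℂ] H) ^ 0) = 1 := pow_zero D
    have happ : ((1 + B * B : H →L[ℂ] H) ξ) = ξ + B (B ξ) := by
      simp [ContinuousLinearMap.add_apply, ContinuousLinearMap.mul_apply]
    rw [happ, inner_add_left]
    have h1 : (@inner ℂ _ _ ξ ξ).re = ‖ξ‖ ^ 2 := by
      rw [inner_self_eq_norm_sq_to_K (𝕜 := ℂ) ξ]
      simp [← Complex.ofReal_pow]
    have h2 : (@inner ℂ _ _ (B (B ξ)) ξ).re = ‖B ξ‖ ^ 2 := by
      have hbs : @inner ℂ _ _ (B (B ξ)) ξ = @inner ℂ _ _ (B ξ) (B ξ) :=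
        hBsa.isSymmetric (B ξ) ξ
      rw [hbs, inner_self_eq_norm_sq_to_K (𝕜 := ℂ) (B ξ)]
      simp [← Complex.ofReal_pow]
    rw [Complex.add_re, h1, h2]
    nlinarith [sq_nonneg ‖B ξ‖]
  have hlower : ∀ ζ : WithLp 2 (H × H), ‖ζ‖ ^ 2 ≤ (@inner ℂ _ _ ((T * T) ζ) ζ).re := by
    intro ζ
    have hζ : ζ = (WithLp.equiv 2 (H × H)).symm (ζ.ofLp.1, ζ.ofLp.2) := rfl
    rw [hζ, hsq ζ.ofLp.1 ζ.ofLp.2]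
    rw [WithLp.prod_norm_sq_eq_of_L2]
    simp only [WithLp.prod_inner_apply, WithLp.equiv_symm_apply, WithLp.ofLp_toLp,
      WithLp.toLp_fst, WithLp.toLp_snd, Complex.add_re]
    exact add_le_add (hblock ζ.ofLp.1) (hblock ζ.ofLp.2)
  -- invertibility
  have hcoer : ∀ ζ : WithLp 2 (H × H), ‖ζ‖ ≤ ‖T ζ‖ := by
    intro ζ
    have h := hlower ζ
    have hTT : (@inner ℂ _ _ ((T * T) ζ) ζ).re = ‖T ζ‖ ^ 2 := by
      have hs : @inner ℂ _ _ (T (T ζ)) ζ = @inner ℂ _ _ (T ζ) (T ζ) :=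
        hTsa.isSymmetric (T ζ) ζ
      rw [ContinuousLinearMap.mul_apply, hs, inner_self_eq_norm_sq_to_K (𝕜 := ℂ) (T ζ)]
      simp [← Complex.ofReal_pow]
    rw [hTT] at h
    nlinarith [norm_nonneg ζ, norm_nonneg (T ζ)]
  exact ⟨hTsa, hsq, hlower, exists_inverse T hTsa.isSymmetric hcoer⟩
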